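/- arXiv:1108.3112 — 2 statements merged into one kernel-verified Lean document; each statement's English description precedes it below -/
import Mathlib

section
/- In a binary tree with n leaves whose edge weights all lie in [f, g], the number of leaves a having no other leaf within weighted distance α of them is at most (2n-2)/2^⌊α/(2g)⌋, provided each such leaf a has at least 2^⌊α/(2g)⌋ vertices within distance α/2. -/
/-- In a binary tree with `n` leaves whose edge weights lie in `[f, g]`, the number of
leaves having no other leaf within weighted distance `α` is at most
`(2n - 2) / 2 ^ ⌊α / (2g)⌋`, provided each such leaf has at least `2 ^ ⌊α / (2g)⌋`
vertices within distance `α / 2`. -/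
theorem isolated_leaves_card_le
    {V : Type*} [Fintype V] [DecidableEq V]
    (G : SimpleGraph V) [DecidableRel G.Adj]
    (hT : G.IsTree)
    (hdeg : ∀ v : V, G.degree v = 1 ∨ G.degree v = 3)
    (n : ℕ)
    (hn : (Finset.univ.filter (fun v : V => G.degree v = 1)).card = n)
    (w : Sym2 V → ℝ) (f g : ℝ) (hf : 0 < f) (hfg : f ≤ g)
    (hw : ∀ e ∈ G.edgeSet, w e ∈ Set.Icc f g)
    (d : V → V → ℝ)
    (hd : ∀ (u v : V) (p : G.Walk u v), p.IsPath → d u v = (p.edges.map w).sum)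
    (α : ℝ)
    (Γ : Finset V)
    (hΓ : Γ = Finset.univ.filter
      (fun a : V => G.degree a = 1 ∧ ∀ b : V, G.degree b = 1 → b ≠ a → α < d a b))
    (hball : ∀ a ∈ Γ,
      2 ^ ⌊α / (2 * g)⌋₊ ≤ (Finset.univ.filter (fun v : V => d a v ≤ α / 2)).card) :
    (Γ.card : ℝ) ≤ (2 * n - 2) / 2 ^ ⌊α / (2 * g)⌋₊ := by
  classical
  set k := ⌊α / (2 * g)⌋₊ with hk
  -- weights on walk edges are nonnegative
  have hw0 : ∀ {u v : V} (p : G.Walk u v), ∀ e ∈ p.edges, 0 ≤ w e := by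
    intro u v p e he
    exact le_trans hf.le (hw e (p.edges_subset_edgeSet he)).1
  -- paths exist between any two vertices
  have hpath : ∀ u v : V, ∃ p : G.Walk u v, p.IsPath := by
    intro u v
    obtain ⟨q⟩ := hT.isConnected.preconnected u v
    exact ⟨q.bypass, q.bypass_isPath⟩
  -- sum over a nodup sublist is at most sum over the list, for nonneg weights
  have hsum : ∀ (s l : List (Sym2 V)), s.Nodup → s ⊆ l → (∀ e ∈ l, 0 ≤ w e) →
      (s.map w).sum ≤ (l.map w).sum := by
    intro s l hs hsl hl
    calc (s.map w).sum = s.toFinset.sum w := (List.sum_toFinset w hs).symm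
      _ ≤ l.toFinset.sum w := by
          refine Finset.sum_le_sum_of_subset_of_nonneg
            (fun e he => List.mem_toFinset.mpr (hsl (List.mem_toFinset.mp he)))
            (fun e he _ => hl e (List.mem_toFinset.mp he))
      _ = (l.dedup.map w).sum := by
          rw [← List.sum_toFinset w l.nodup_dedup]
          congr 1
          ext e
          simp
      _ ≤ (l.map w).sum := by
          refine List.Sublist.sum_le_sum ((l.dedup_sublist).map w) ?_
          intro a ha
          obtain ⟨e, he, rfl⟩ := List.mem_map.mp ha
          exact hl e he
  -- symmetry of d
  have hsymm : ∀ u v : V, d u v = d v u := by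
    intro u v
    obtain ⟨p, hp⟩ := hpath u v
    rw [hd u v p hp, hd v u p.reverse hp.reverse, SimpleGraph.Walk.edges_reverse,
      List.map_reverse, List.sum_reverse]
  -- triangle inequality
  have htri : ∀ a u b : V, d a b ≤ d a u + d u b := by
    intro a u b
    obtain ⟨p, hp⟩ := hpath a u
    obtain ⟨q, hq⟩ := hpath u b
    have hr : (p.append q).bypass.IsPath := (p.append q).bypass_isPath
    rw [hd a b _ hr, hd a u p hp, hd u b q hq]
    calc ((p.append q).bypass.edges.map w).sum
        ≤ ((p.append q).edges.map w).sum :=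
          hsum _ _ hr.isTrail.edges_nodup (p.append q).edges_bypass_subset
            (hw0 (p.append q))
      _ = (p.edges.map w).sum + (q.edges.map w).sum := by
          rw [SimpleGraph.Walk.edges_append, List.map_append, List.sum_append]
  -- balls are pairwise disjoint
  set B : V → Finset V := fun a => Finset.univ.filter (fun v : V => d a v ≤ α / 2) with hB
  have hdisj : ∀ a ∈ Γ, ∀ b ∈ Γ, a ≠ b → Disjoint (B a) (B b) := by
    intro a ha b hb hab
    rw [Finset.disjoint_left]
    intro v hva hvb
    simp only [hB, Finset.mem_filter] at hva hvb
    rw [hΓ, Finset.mem_filter] at ha hb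
    have hlt : α < d a b := ha.2.2 b hb.2.1 (Ne.symm hab)
    have : d a b ≤ α := by
      calc d a b ≤ d a v + d v b := htri a v b
        _ = d a v + d b v := by rw [hsymm v b]
        _ ≤ α / 2 + α / 2 := add_le_add hva.2 hvb.2
        _ = α := by ring
    linarith
  -- counting
  have hcount : Γ.card * 2 ^ k ≤ Fintype.card V := by
    calc Γ.card * 2 ^ k = ∑ _a ∈ Γ, 2 ^ k := by rw [Finset.sum_const, smul_eq_mul]
      _ ≤ ∑ a ∈ Γ, (B a).card := Finset.sum_le_sum hball
      _ = (Γ.biUnion B).card := (Finset.card_biUnion hdisj).symm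
      _ ≤ Finset.univ.card := Finset.card_le_card (Finset.subset_univ _)
      _ = Fintype.card V := Finset.card_univ
  -- vertex count: Fintype.card V + 2 = 2 * n
  have hVcard : Fintype.card V + 2 = 2 * n := by
    have hedge : G.edgeFinset.card + 1 = Fintype.card V := hT.card_edgeFinset
    have hhand : ∑ v : V, G.degree v = 2 * G.edgeFinset.card :=
      G.sum_degrees_eq_twice_card_edges
    set A := Finset.univ.filter (fun v : V => G.degree v = 1) with hA
    have hsplit : ∑ v : V, G.degree v = n + 3 * (Fintype.card V - n) := by
      rw [← Finset.sum_filter_add_sum_filter_not Finset.univ (fun v => G.degree v = 1)]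
      have h1 : ∑ v ∈ A, G.degree v = n := by
        rw [← hn]
        rw [Finset.sum_congr rfl (fun v hv => (Finset.mem_filter.mp hv).2)]
        simp
        convert rfl
      have h2 : ∑ v ∈ Finset.univ.filter (fun v : V => ¬ G.degree v = 1), G.degree v
          = 3 * (Fintype.card V - n) := by
        have h3 : ∀ v ∈ Finset.univ.filter (fun v : V => ¬ G.degree v = 1),
            G.degree v = 3 := by
          intro v hv
          rcases hdeg v with h | h
          · exact absurd h (Finset.mem_filter.mp hv).2
          · exact h
        rw [Finset.sum_congr rfl h3, Finset.sum_const, smul_eq_mul,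
          Finset.filter_not, Finset.card_sdiff_of_subset (Finset.filter_subset _ _)]
        rw [← hA, hn, Finset.card_univ, mul_comm]
      rw [h1, h2]
    have hnle : n ≤ Fintype.card V := by
      rw [← hn, ← Finset.card_univ]
      exact Finset.card_le_card (Finset.filter_subset _ _)
    omega
  -- conclude
  have h2k : (0:ℝ) < 2 ^ k := by positivity
  rw [le_div_iff₀ h2k]
  have h1 : (Γ.card * 2 ^ k : ℝ) ≤ (Fintype.card V : ℝ) := by exact_mod_cast hcount
  have h2 : ((Fintype.card V : ℝ)) + 2 = 2 * n := by exact_mod_cast congrArg (Nat.cast : ℕ → ℝ) hVcard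
  push_cast at h1 ⊢
  linarith
end

section
/- In a two-component GTR mixture, suppose the pair c_1 = (a_1,b_1) has d_1(a_1,b_1) ≤ C_c and is T_2-stretched, the pair c_2 = (a_2,b_2) has d_2(a_2,b_2) ≤ C_c and is T_1-stretched, and conditionally on each component the four σ-variables factor as described. Then r(c_1,c_2) := E[σ_{a_1}σ_{b_1}σ_{a_2}σ_{b_2}] - q(a_1,b_1)q(a_2,b_2) = -ν_1 ν_2 e^{-d_1(a_1,b_1)} e^{-d_2(a_2,b_2)} + O((log n)^{-c}) ≤ -½ ν_min e^{-2C_c} for n large enough. -/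
/-- Cross-statistic for pairs in different components of a two-component GTR mixture:
if `c₁` is a quasicherry in `T₁` (`d₁(c₁) ≤ C_c`) and `T₂`-stretched, `c₂` is a
quasicherry in `T₂` and `T₁`-stretched, and the four-point expectation `E4` vanishes up
to `(log n)^{-c}` (the conditional factorization), then
`r(c₁,c₂) = E4 - q(c₁) q(c₂) = -ν₁ ν₂ e^{-d₁(c₁)} e^{-d₂(c₂)} + O((log n)^{-c})`, and is
at most `-½ ν_min e^{-2 C_c}` once the error terms are small enough (n large). -/
theorem cross_component_statistic_negative
    (n : ℕ) (ν₁ ν₂ νmin C_c C_st c : ℝ)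
    (hνmin : 0 < νmin) (hνmin' : νmin ≤ 1 / 2)
    (hν₁ : νmin ≤ ν₁) (hν₂ : νmin ≤ ν₂) (hsum : ν₁ + ν₂ = 1)
    (hCc : 0 < C_c) (hCst : 0 < C_st) (hc : 0 < c)
    (hlog : 1 ≤ Real.log n)
    (d₁c₁ d₂c₁ d₁c₂ d₂c₂ : ℝ)
    (h₁ : 0 ≤ d₁c₁) (h₂ : 0 ≤ d₂c₁) (h₃ : 0 ≤ d₁c₂) (h₄ : 0 ≤ d₂c₂)
    (hq₁ : d₁c₁ ≤ C_c) (hq₂ : d₂c₂ ≤ C_c)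
    (hstr₁ : C_st * Real.log (Real.log n) ≤ d₂c₁)
    (hstr₂ : C_st * Real.log (Real.log n) ≤ d₁c₂)
    (E4 : ℝ) (hE4 : |E4| ≤ Real.log n ^ (-c))
    (r : ℝ)
    (hr : r = E4 -
      (ν₁ * Real.exp (-d₁c₁) + ν₂ * Real.exp (-d₂c₁)) *
        (ν₁ * Real.exp (-d₁c₂) + ν₂ * Real.exp (-d₂c₂))) :
    |r - (-(ν₁ * ν₂ * Real.exp (-d₁c₁) * Real.exp (-d₂c₂)))|
        ≤ Real.log n ^ (-c) + 3 * Real.log n ^ (-C_st) ∧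
      (Real.log n ^ (-c) + 3 * Real.log n ^ (-C_st)
          ≤ ν₁ * ν₂ * Real.exp (-d₁c₁) * Real.exp (-d₂c₂)
            - (1 / 2) * νmin * Real.exp (-(2 * C_c)) →
        r ≤ -(1 / 2) * νmin * Real.exp (-(2 * C_c))) := by
  have hL0 : (0:ℝ) < Real.log n := lt_of_lt_of_le one_pos hlog
  have hν₁0 : 0 < ν₁ := lt_of_lt_of_le hνmin hν₁
  have hν₂0 : 0 < ν₂ := lt_of_lt_of_le hνmin hν₂
  have hν₁1 : ν₁ ≤ 1 := by linarith
  have hν₂1 : ν₂ ≤ 1 := by linarith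
  have hpow : Real.log n ^ (-C_st) = Real.exp (-(C_st * Real.log (Real.log n))) := by
    rw [Real.rpow_def_of_pos hL0]; ring_nf
  have hb1 : Real.exp (-d₂c₁) ≤ Real.log n ^ (-C_st) := by
    rw [hpow]; exact Real.exp_le_exp.2 (by linarith)
  have hb2 : Real.exp (-d₁c₂) ≤ Real.log n ^ (-C_st) := by
    rw [hpow]; exact Real.exp_le_exp.2 (by linarith)
  have he1 : Real.exp (-d₁c₁) ≤ 1 := Real.exp_le_one_iff.2 (by linarith)
  have he2 : Real.exp (-d₂c₁) ≤ 1 := Real.exp_le_one_iff.2 (by linarith)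
  have he3 : Real.exp (-d₁c₂) ≤ 1 := Real.exp_le_one_iff.2 (by linarith)
  have he4 : Real.exp (-d₂c₂) ≤ 1 := Real.exp_le_one_iff.2 (by linarith)
  have hp1 := Real.exp_pos (-d₁c₁)
  have hp2 := Real.exp_pos (-d₂c₁)
  have hp3 := Real.exp_pos (-d₁c₂)
  have hp4 := Real.exp_pos (-d₂c₂)
  set e1 := Real.exp (-d₁c₁)
  set e2 := Real.exp (-d₂c₁)
  set e3 := Real.exp (-d₁c₂)
  set e4 := Real.exp (-d₂c₂)
  have hA : ν₁ * e1 * (ν₁ * e3) ≤ Real.log n ^ (-C_st) := by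
    have h' : ν₁ * e1 * (ν₁ * e3) ≤ 1 * 1 * (1 * (Real.log n ^ (-C_st))) := by
      gcongr <;> first | positivity | linarith
    simpa using h'
  have hA0 : 0 ≤ ν₁ * e1 * (ν₁ * e3) := by positivity
  have hB : ν₂ * e2 * (ν₁ * e3) ≤ Real.log n ^ (-C_st) := by
    have h' : ν₂ * e2 * (ν₁ * e3) ≤ 1 * 1 * (1 * (Real.log n ^ (-C_st))) := by
      gcongr <;> first | positivity | linarith
    simpa using h'
  have hB0 : 0 ≤ ν₂ * e2 * (ν₁ * e3) := by positivity
  have hC : ν₂ * e2 * (ν₂ * e4) ≤ Real.log n ^ (-C_st) := by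
    have h' : ν₂ * e2 * (ν₂ * e4) ≤ 1 * (Real.log n ^ (-C_st)) * (1 * 1) := by
      gcongr <;> first | positivity | linarith
    simpa using h'
  have hC0 : 0 ≤ ν₂ * e2 * (ν₂ * e4) := by positivity
  obtain ⟨hE4l, hE4u⟩ := abs_le.1 hE4
  have key : r - (-(ν₁ * ν₂ * e1 * e4)) =
      E4 - ν₁ * e1 * (ν₁ * e3) - ν₂ * e2 * (ν₁ * e3) - ν₂ * e2 * (ν₂ * e4) := by
    rw [hr]; ring
  constructor
  · rw [key, abs_le]; constructor <;> linarith
  · intro h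
    have := (abs_le.1 (by rw [key, abs_le]; constructor <;> linarith :
      |r - (-(ν₁ * ν₂ * e1 * e4))| ≤ Real.log n ^ (-c) + 3 * Real.log n ^ (-C_st))).2
    linarith
end
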